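/- If a topological space X has a countable cover by open subspaces each of which is quasi-Polish, then X is quasi-Polish. -/

import Mathlib

open TopologicalSpace Set Topology

/-- A Π⁰₂ set: a countable intersection of sets of the form (complement of open) ∪ open. -/
def IsPi02 {X : Type*} [TopologicalSpace X] (s : Set X) : Prop :=
  ∃ U V : ℕ → Set X, (∀ n, IsOpen (U n)) ∧ (∀ n, IsOpen (V n)) ∧
    s = ⋂ n, ((U n)ᶜ ∪ V n)

/-- A quasi-Polish space: homeomorphic to a Π⁰₂ subspace of 𝕊^ℕ,
where 𝕊 is the Sierpiński space (`Prop` with its topology in Mathlib). -/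
def QuasiPolish (X : Type*) [TopologicalSpace X] : Prop :=
  ∃ s : Set (ℕ → Prop), IsPi02 s ∧ Nonempty (X ≃ₜ s)

/-!
Choose embeddings `eₙ : Uₙ → 𝕊^ℕ` with Π⁰₂ ranges and code a point `x` by the flags `x ∈ Uₙ`
together with the codes `eₙ x` (all `False` when `x ∉ Uₙ`). The resulting continuous map
`F : X → 𝕊^(ℕ ⊕ ℕ × ℕ)` is an embedding on each `Uₙ = F⁻¹ Oₙ`, `Oₙ` being the open set where the
`n`-th flag is up, since the `n`-th block of codes recovers `eₙ`; as the `Oₙ` are open, `F` is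
an embedding. Its range is `(⋃ Oₙ) ∩ ⋂ (Oₙᶜ ∪ F(Uₙ))`, and each `F(Uₙ)` is Π⁰₂: it consists of
the points whose `n`-th block lies in `range eₙ` and which are fixed by the continuous map
`p ↦ F (eₙ⁻¹ (n-th block of p))`, and equality of two continuous maps into `𝕊^ℕ` is a Π⁰₂
condition.
-/

section IsPi02

variable {X Y : Type*} [TopologicalSpace X] [TopologicalSpace Y]

theorem IsOpen.isPi02 {s : Set X} (hs : IsOpen s) : IsPi02 s :=
  ⟨fun _ => univ, fun _ => s, fun _ => isOpen_univ, fun _ => hs,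
    by simp only [compl_univ, empty_union, iInter_const]⟩

theorem isPi02_iInter_nat {s : ℕ → Set X} (h : ∀ n, IsPi02 (s n)) : IsPi02 (⋂ n, s n) := by
  choose U V hU hV hs using h
  refine ⟨fun k => U k.unpair.1 k.unpair.2, fun k => V k.unpair.1 k.unpair.2,
    fun k => hU _ _, fun k => hV _ _, ?_⟩
  simp_rw [hs]
  exact (iInter_unpair fun n m => (U n m)ᶜ ∪ V n m).symm

theorem isPi02_iInter {ι : Sort*} [Countable ι] {s : ι → Set X} (h : ∀ i, IsPi02 (s i)) :
    IsPi02 (⋂ i, s i) := by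
  cases isEmpty_or_nonempty ι
  · simpa using isOpen_univ.isPi02
  · obtain ⟨g, hg⟩ := exists_surjective_nat ι
    rw [← hg.iInter_comp]
    exact isPi02_iInter_nat fun n => h (g n)

theorem IsPi02.inter {s t : Set X} (hs : IsPi02 s) (ht : IsPi02 t) : IsPi02 (s ∩ t) := by
  rw [inter_eq_iInter]
  exact isPi02_iInter fun b => by cases b <;> assumption

theorem IsPi02.compl_union {s O : Set X} (hs : IsPi02 s) (hO : IsOpen O) : IsPi02 (Oᶜ ∪ s) := by
  obtain ⟨U, V, hU, hV, rfl⟩ := hs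
  refine ⟨fun n => O ∩ U n, V, fun n => hO.inter (hU n), hV, ?_⟩
  simp_rw [Set.union_iInter, compl_inter, union_assoc]

theorem IsPi02.preimage {f : X → Y} (hf : Continuous f) {s : Set Y} (hs : IsPi02 s) :
    IsPi02 (f ⁻¹' s) := by
  obtain ⟨U, V, hU, hV, rfl⟩ := hs
  exact ⟨fun n => f ⁻¹' U n, fun n => f ⁻¹' V n, fun n => (hU n).preimage hf,
    fun n => (hV n).preimage hf, by simp only [preimage_iInter, preimage_union, preimage_compl]⟩

theorem IsPi02.exists_isPi02_preimage_eq {f : X → Y} (hf : IsInducing f) {s : Set X}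
    (hs : IsPi02 s) : ∃ t, IsPi02 t ∧ f ⁻¹' t = s := by
  obtain ⟨U, V, hU, hV, rfl⟩ := hs
  choose U' hU' hUU' using fun n => hf.isOpen_iff.mp (hU n)
  choose V' hV' hVV' using fun n => hf.isOpen_iff.mp (hV n)
  exact ⟨_, ⟨U', V', hU', hV', rfl⟩,
    by simp only [preimage_iInter, preimage_union, preimage_compl, hUU', hVV']⟩

theorem IsPi02.image_val {W : Set X} (hW : IsPi02 W) {s : Set W} (hs : IsPi02 s) :
    IsPi02 (((↑) : W → X) '' s) := by
  obtain ⟨t, ht, rfl⟩ := hs.exists_isPi02_preimage_eq .subtypeVal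
  rw [Subtype.image_preimage_coe]
  exact hW.inter ht

theorem isPi02_setOf_eq {ι : Type*} [Countable ι] {f g : X → ι → Prop} (hf : Continuous f)
    (hg : Continuous g) : IsPi02 {x | f x = g x} := by
  have hopen {h : X → ι → Prop} (hh : Continuous h) (i : ι) : IsOpen {x | h x i} :=
    continuous_Prop.mp ((continuous_apply i).comp hh)
  have : {x | f x = g x} =
      ⋂ i, ({x | f x i}ᶜ ∪ {x | g x i}) ∩ ({x | g x i}ᶜ ∪ {x | f x i}) := by
    ext x
    simp only [mem_ofPred_eq, funext_iff, propext_iff, iff_iff_implies_and_implies, imp_iff_not_or,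
      mem_iInter, mem_inter_iff, mem_union, mem_compl_iff]
  rw [this]
  exact isPi02_iInter fun i => ((hopen hg i).isPi02.compl_union (hopen hf i)).inter
    ((hopen hf i).isPi02.compl_union (hopen hg i))

theorem IsPi02.range_of_comp {ι W : Type*} [Countable ι] [TopologicalSpace W]
    {h : Y → ι → Prop} {r : (ι → Prop) → W} (hh : Continuous h) (hr : Continuous r)
    (he : IsEmbedding (r ∘ h)) (hS : IsPi02 (range (r ∘ h))) : IsPi02 (range h) := by
  set T := r ⁻¹' range (r ∘ h)
  let σ : T → Y := he.toHomeomorph.symm ∘ fun p => ⟨r p, p.2⟩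
  have hσ : Continuous σ := he.toHomeomorph.symm.continuous.comp (by fun_prop)
  have : range h = (↑) '' {p : T | h (σ p) = p} := by
    ext p
    constructor
    · rintro ⟨y, rfl⟩
      exact ⟨⟨h y, y, rfl⟩, congrArg h (he.toHomeomorph_symm_apply y), rfl⟩
    · rintro ⟨p, hp, rfl⟩
      exact ⟨σ p, hp⟩
  rw [this]
  exact (hS.preimage hr).image_val (isPi02_setOf_eq (hh.comp hσ) continuous_subtype_val)

end IsPi02

section OpenCover

variable {X Z ι : Type*} [TopologicalSpace Z] {F : X → Z} {U : ι → Set X}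
  {O : ι → Set Z}

theorem isPi02_range_of_cover [Countable ι] (hU : ⋃ i, U i = univ) (hO : ∀ i, IsOpen (O i))
    (hFO : ∀ i, F ⁻¹' O i = U i) (himg : ∀ i, IsPi02 (F '' U i)) : IsPi02 (range F) := by
  have : range F = (⋃ i, O i) ∩ ⋂ i, ((O i)ᶜ ∪ F '' U i) := by
    ext p
    refine ⟨?_, fun ⟨hp, hpU⟩ => ?_⟩
    · rintro ⟨x, rfl⟩
      obtain ⟨i, hi⟩ := mem_iUnion.mp (hU ▸ mem_univ x)
      refine ⟨mem_iUnion.mpr ⟨i, ((hFO i).symm ▸ hi : x ∈ F ⁻¹' O i)⟩, mem_iInter.mpr fun j => ?_⟩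
      exact (em' (F x ∈ O j)).imp_right fun hj => ⟨x, hFO j ▸ hj, rfl⟩
    · obtain ⟨i, hi⟩ := mem_iUnion.mp hp
      obtain ⟨x, -, rfl⟩ := ((mem_iInter.mp hpU i).resolve_left (not_not.mpr hi))
      exact mem_range_self x
  rw [this]
  exact (isOpen_iUnion hO).isPi02.inter (isPi02_iInter fun i => (himg i).compl_union (hO i))

variable [TopologicalSpace X]

theorem isEmbedding_of_isEmbedding_comp_val (hF : Continuous F) (hU : ⋃ i, U i = univ)
    (hO : ∀ i, IsOpen (O i)) (hFO : ∀ i, F ⁻¹' O i = U i)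
    (he : ∀ i, IsEmbedding (F ∘ ((↑) : U i → X))) : IsEmbedding F := by
  have hmem (x : X) : ∃ i, x ∈ U i := mem_iUnion.mp (hU ▸ mem_univ x)
  refine ⟨⟨le_antisymm hF.le_induced fun W hW => ?_⟩, fun x y hxy => ?_⟩
  · choose V hV hVW using fun i => (he i).isOpen_iff.mp (hW.preimage continuous_subtype_val)
    refine isOpen_induced_iff.mpr ⟨⋃ i, O i ∩ V i, isOpen_iUnion fun i => (hO i).inter (hV i), ?_⟩
    ext x
    simp only [preimage_iUnion, preimage_inter, mem_iUnion, mem_inter_iff, hFO]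
    refine ⟨fun ⟨i, hi, hxV⟩ => ?_, fun hx => ?_⟩
    · exact (Set.ext_iff.mp (hVW i) ⟨x, hi⟩).mp hxV
    · obtain ⟨i, hi⟩ := hmem x
      exact ⟨i, hi, (Set.ext_iff.mp (hVW i) ⟨x, hi⟩).mpr hx⟩
  · obtain ⟨i, hx⟩ := hmem x
    have hy : y ∈ U i := by rw [← hFO] at hx ⊢; rwa [mem_preimage, ← hxy]
    exact congrArg Subtype.val (@(he i).injective ⟨x, hx⟩ ⟨y, hy⟩ hxy)

end OpenCover

section QuasiPolish

variable {X : Type*} [TopologicalSpace X]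

theorem QuasiPolish.exists_isEmbedding (hX : QuasiPolish X) :
    ∃ e : X → ℕ → Prop, IsEmbedding e ∧ IsPi02 (range e) := by
  obtain ⟨s, hs, ⟨E⟩⟩ := hX
  refine ⟨(↑) ∘ E, IsEmbedding.subtypeVal.comp E.isEmbedding, ?_⟩
  rwa [range_comp, E.range_coe, image_univ, Subtype.range_coe]

theorem QuasiPolish.of_isEmbedding {ι : Type*} [Countable ι] [Infinite ι] {e : X → ι → Prop}
    (he : IsEmbedding e) (hrange : IsPi02 (range e)) : QuasiPolish X := by
  obtain ⟨_⟩ := nonempty_denumerable ι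
  let φ : (ι → Prop) ≃ₜ (ℕ → Prop) := .piCongrLeft (Y := fun _ => Prop) (Denumerable.eqv ι)
  refine ⟨range (φ ∘ e), ?_, ⟨(φ.isEmbedding.comp he).toHomeomorph⟩⟩
  rw [range_comp, φ.image_eq_preimage_symm]
  exact hrange.preimage φ.symm.continuous

end QuasiPolish

section CoverCode

variable {X ι κ : Type*} (U : ι → Set X) (e : ∀ i, U i → κ → Prop)

def coverCode (x : X) : ι ⊕ ι × κ → Prop :=
  Sum.elim (fun i => x ∈ U i) fun ik => ∃ h : x ∈ U ik.1, e ik.1 ⟨x, h⟩ ik.2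

theorem coverCode_comp_val (i : ι) :
    (fun p k => p (.inr (i, k))) ∘ coverCode U e ∘ ((↑) : U i → X) = e i := by
  funext ⟨x, hx⟩ k
  simp [coverCode, hx]

variable [TopologicalSpace X] {U e}

theorem continuous_coverCode (hU : ∀ i, IsOpen (U i)) (he : ∀ i, Continuous (e i)) :
    Continuous (coverCode U e) := by
  refine continuous_pi fun j => continuous_Prop.mpr ?_
  rcases j with i | ⟨i, k⟩
  · exact hU i
  · have : {x | coverCode U e x (.inr (i, k))} = (↑) '' {y : U i | e i y k} := by
      ext x
      simp [coverCode]
    rw [this]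
    exact (hU i).isOpenMap_subtype_val _ (continuous_Prop.mp ((continuous_apply k).comp (he i)))

theorem isEmbedding_coverCode_comp_val (hU : ∀ i, IsOpen (U i)) (he : ∀ i, IsEmbedding (e i))
    (i : ι) : IsEmbedding (coverCode U e ∘ ((↑) : U i → X)) := by
  have hF := continuous_coverCode hU fun i => (he i).continuous
  have hei := coverCode_comp_val U e i ▸ he i
  exact ⟨.of_comp (hF.comp continuous_subtype_val) (by fun_prop) hei.isInducing,
    hei.injective.of_comp⟩

theorem isPi02_image_coverCode [Countable ι] [Countable κ] (hU : ∀ i, IsOpen (U i))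
    (he : ∀ i, IsEmbedding (e i)) {i : ι} (hrange : IsPi02 (range (e i))) :
    IsPi02 (coverCode U e '' U i) := by
  have hF := continuous_coverCode hU fun i => (he i).continuous
  rw [image_eq_range]
  exact .range_of_comp (hF.comp continuous_subtype_val) (by fun_prop)
    (coverCode_comp_val U e i ▸ he i) (coverCode_comp_val U e i ▸ hrange)

end CoverCode

theorem quasiPolish_of_countable_open_cover {X : Type*} [TopologicalSpace X]
    (U : ℕ → Set X) (hopen : ∀ n, IsOpen (U n)) (hcover : ⋃ n, U n = Set.univ)
    (hq : ∀ n, QuasiPolish (U n)) : QuasiPolish X := by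
  choose e he hrange using fun n => (hq n).exists_isEmbedding
  have hO (n : ℕ) : IsOpen {p : ℕ ⊕ ℕ × ℕ → Prop | p (.inl n)} :=
    continuous_Prop.mp (continuous_apply _)
  have hFO (n : ℕ) : coverCode U e ⁻¹' {p | p (.inl n)} = U n := rfl
  have hF := continuous_coverCode hopen fun n => (he n).continuous
  exact .of_isEmbedding
    (isEmbedding_of_isEmbedding_comp_val hF hcover hO hFO (isEmbedding_coverCode_comp_val hopen he))
    (isPi02_range_of_cover hcover hO hFO fun n => isPi02_image_coverCode hopen he (hrange n))
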